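/- Let G be a finite group, p a prime number, and H, K subgroups of G. Then there exists g ∈ G such that H ∩ gKg⁻¹ is a p-subnormal subgroup of both H and gKg⁻¹ if and only if O^p(H) and O^p(K) are conjugate subgroups of G. -/

import Mathlib

/-- `K` is a `p`-subnormal subgroup of `H` (both viewed as subgroups of an ambient group
`G`): there is a chain of subgroups `K = K₀ ≤ K₁ ≤ ⋯ ≤ K_t = H` in which each `K_i` is a
normal subgroup of `K_{i+1}` of index `p`. -/
def IsPSubnormalIn {G : Type*} [Group G] (p : ℕ) (K H : Subgroup G) : Prop :=
  ∃ (t : ℕ) (f : Fin (t + 1) → Subgroup G),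
    f 0 = K ∧ f (Fin.last t) = H ∧
    ∀ i : Fin t, f i.castSucc ≤ f i.succ ∧
      ((f i.castSucc).subgroupOf (f i.succ)).Normal ∧
      (f i.castSucc).relIndex (f i.succ) = p

/-- `O^p(G)`: the intersection of all normal subgroups `N ⊴ G` such that `G/N` is a
`p`-group. -/
def pResidual (p : ℕ) (G : Type*) [Group G] : Subgroup G :=
  sInf {N : Subgroup G | ∃ h : N.Normal, letI := h; IsPGroup p (G ⧸ N)}

/-- For a subgroup `H ≤ G`, the subgroup `O^p(H)` of `H` regarded as a subgroup of `G`. -/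
def pResidualIn {G : Type*} [Group G] (p : ℕ) (H : Subgroup G) : Subgroup G :=
  (pResidual p H).map H.subtype

/-- The conjugate subgroup `g K g⁻¹`. -/
def conjSub {G : Type*} [Group G] (g : G) (K : Subgroup G) : Subgroup G :=
  K.map (MulAut.conj g).toMonoidHom

/-!
`O^p(H)` is the subgroup generated by the elements of `H` of order prime to `p`. Such an
element maps to an element of order prime to `p` in the quotient of order `p` of a normal
index-`p` step, hence trivially; so it survives every step of a chain, and a `p`-subnormal
`K ≤ H` has `O^p(K) = O^p(H)`. As `O^p` commutes with conjugation, the forward direction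
follows.

Conversely, `H / O^p(H)` is a `p`-group, and in a finite `p`-group every subgroup is
`p`-subnormal (normalizers grow, and `N(A)/A` has a subgroup of order `p`). Hence every
subgroup between `O^p(H)` and `H` is `p`-subnormal in `H`. If `O^p(H) = O^p(g⁻¹Kg)`, then
`H ⊓ g⁻¹Kg` lies between this subgroup and each of `H`, `g⁻¹Kg`.
-/

open Subgroup

section PStep

variable {G G' : Type*} [Group G] [Group G'] {p : ℕ}

def IsPStep (p : ℕ) (A B : Subgroup G) : Prop :=
  A ≤ B ∧ (A.subgroupOf B).Normal ∧ A.relIndex B = p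

theorem isPSubnormalIn_iff_reflTransGen {K H : Subgroup G} :
    IsPSubnormalIn p K H ↔ Relation.ReflTransGen (IsPStep p) K H := by
  constructor
  · rintro ⟨t, f, rfl, rfl, hstep⟩
    suffices ∀ i, Relation.ReflTransGen (IsPStep p) (f 0) (f i) from this _
    intro i
    induction i using Fin.induction with
    | zero => exact .refl
    | succ i ih => exact ih.tail (hstep i)
  · intro h
    induction h using Relation.ReflTransGen.head_induction_on with
    | refl => exact ⟨0, fun _ => H, rfl, rfl, fun i => i.elim0⟩
    | head hAB _ ih =>
      obtain ⟨t, f, rfl, rfl, hstep⟩ := ih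
      exact ⟨t + 1, Fin.cons _ f, rfl, rfl, Fin.cases hAB hstep⟩

theorem IsPStep.map {f : G →* G'} (hf : Function.Injective f) {A B : Subgroup G}
    (h : IsPStep p A B) : IsPStep p (A.map f) (B.map f) := by
  obtain ⟨hAB, hN, hrel⟩ := h
  refine ⟨map_mono hAB, ?_, by rwa [relIndex_map_map_of_injective _ _ hf]⟩
  rw [normal_subgroupOf_iff_le_normalizer (map_mono hAB)]
  exact (map_mono ((normal_subgroupOf_iff_le_normalizer hAB).1 hN)).trans (le_normalizer_map f)

theorem IsPStep.comap {f : G →* G'} (hf : Function.Surjective f) {A B : Subgroup G'}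
    (h : IsPStep p A B) : IsPStep p (A.comap f) (B.comap f) := by
  obtain ⟨hAB, hN, hrel⟩ := h
  refine ⟨comap_mono hAB, ?_, by rwa [relIndex_comap, map_comap_eq_self_of_surjective hf]⟩
  rw [normal_subgroupOf_iff_le_normalizer (comap_mono hAB)]
  exact (comap_mono ((normal_subgroupOf_iff_le_normalizer hAB).1 hN)).trans
    (le_normalizer_comap f)

theorem mem_of_isPGroup_quotient (hp : p.Prime) {N : Subgroup G} [N.Normal]
    (hN : IsPGroup p (G ⧸ N)) {x : G} (hx : ¬ p ∣ orderOf x) : x ∈ N := by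
  obtain ⟨k, hk⟩ := hN x
  have hcop : (orderOf x).Coprime (p ^ k) := ((hp.coprime_iff_not_dvd.2 hx).symm).pow_right k
  have : orderOf (x : G ⧸ N) = 1 :=
    Nat.eq_one_of_dvd_coprimes hcop (orderOf_map_dvd (QuotientGroup.mk' N) x)
      (orderOf_dvd_of_pow_eq_one hk)
  rwa [orderOf_eq_one_iff, QuotientGroup.eq_one_iff] at this

theorem IsPStep.mem_of_not_dvd_orderOf (hp : p.Prime) {A B : Subgroup G} (h : IsPStep p A B)
    {x : G} (hxB : x ∈ B) (hx : ¬ p ∣ orderOf x) : x ∈ A := by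
  obtain ⟨-, hN, hrel⟩ := h
  have hQ : IsPGroup p (B ⧸ A.subgroupOf B) :=
    IsPGroup.of_card (n := 1) (by rw [← index_eq_card, pow_one]; exact hrel)
  exact mem_subgroupOf.1 <| mem_of_isPGroup_quotient hp hQ (x := ⟨x, hxB⟩) (by
    rwa [← orderOf_submonoid])

end PStep

section PGroup

variable {G : Type*} [Group G] {p : ℕ}

theorem isPStep_map_comap_mk' {A N : Subgroup G} (hAN : A ≤ N) [(A.subgroupOf N).Normal]
    {C : Subgroup (N ⧸ A.subgroupOf N)} (hC : Nat.card C = p) :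
    IsPStep p A ((C.comap (QuotientGroup.mk' _)).map N.subtype) := by
  have hAE : A ≤ (C.comap (QuotientGroup.mk' _)).map N.subtype := fun a ha =>
    ⟨⟨a, hAN ha⟩, by
      change QuotientGroup.mk _ ∈ C
      rw [(QuotientGroup.eq_one_iff _).2 (mem_subgroupOf.2 ha)]
      exact C.one_mem, rfl⟩
  refine ⟨hAE, ?_, ?_⟩
  · rw [normal_subgroupOf_iff_le_normalizer hAE]
    exact (map_subtype_le _).trans ((normal_subgroupOf_iff_le_normalizer hAN).1 inferInstance)
  · have hA : (A.subgroupOf N).map N.subtype = A := by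
      rw [subgroupOf_map_subtype, inf_of_le_left hAN]
    have h := relIndex_map_map_of_injective (A.subgroupOf N) (C.comap (QuotientGroup.mk' _))
      N.subtype_injective
    have hker :=
      relIndex_ker (C.comap (QuotientGroup.mk' _)) (QuotientGroup.mk' (A.subgroupOf N))
    rw [QuotientGroup.ker_mk', map_comap_eq_self_of_surjective (QuotientGroup.mk'_surjective _)]
      at hker
    rw [hA] at h
    rw [h, hker, hC]

variable [Finite G]

theorem IsPGroup.exists_isPStep (hp : p.Prime) (hG : IsPGroup p G) {A : Subgroup G}
    (hA : A ≠ ⊤) : ∃ E, IsPStep p A E := by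
  have : Fact p.Prime := ⟨hp⟩
  have : Group.IsNilpotent G := hG.isNilpotent
  have hAN : A < normalizer (A : Set G) :=
    Group.normalizerCondition_of_isNilpotent A (lt_top_iff_ne_top.2 hA)
  have : (A.subgroupOf (normalizer (A : Set G))).Normal := normal_in_normalizer
  obtain ⟨n, hn, hcard⟩ := ((hG.to_subgroup _).to_quotient _).nontrivial_iff_card.1 <|
    QuotientGroup.nontrivial_iff.2 (by rw [Ne, subgroupOf_eq_top]; exact hAN.not_ge)
  obtain ⟨C, hC⟩ := Sylow.exists_subgroup_card_pow_prime p (n := 1) (hcard ▸ pow_dvd_pow p hn)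
  exact ⟨_, isPStep_map_comap_mk' hAN.le (hC.trans (pow_one p))⟩

theorem IsPGroup.reflTransGen_isPStep_top (hp : p.Prime) (hG : IsPGroup p G) (A : Subgroup G) :
    Relation.ReflTransGen (IsPStep p) A ⊤ := by
  induction A using WellFoundedGT.induction with
  | _ A ih =>
    by_cases hA : A = ⊤
    · exact hA ▸ .refl
    obtain ⟨E, hE⟩ := hG.exists_isPStep hp hA
    have hAE : A < E :=
      lt_of_le_of_ne hE.1 fun h => hp.one_lt.ne (by rw [← hE.2.2, h, relIndex_self])
    exact .head hE (ih E hAE)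

end PGroup

section Residual

variable {G G' : Type*} [Group G] [Group G'] {p : ℕ}

theorem exists_not_dvd_orderOf_pow_prime_pow (hp : p.Prime) {x : G} (hx : IsOfFinOrder x) :
    ∃ k, ¬ p ∣ orderOf (x ^ p ^ k) := by
  refine ⟨(orderOf x).factorization p, ?_⟩
  rw [orderOf_pow_of_dvd (pow_ne_zero _ hp.ne_zero) (Nat.ordProj_dvd _ _)]
  exact Nat.not_dvd_ordCompl hp hx.orderOf_pos.ne'

instance normal_closure_setOf_not_dvd_orderOf (p : ℕ) (G : Type*) [Group G] :
    (closure {x : G | ¬ p ∣ orderOf x}).Normal where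
  conj_mem n hn g := by
    have hle : closure {x : G | ¬ p ∣ orderOf x} ≤
        (closure {x : G | ¬ p ∣ orderOf x}).comap (MulAut.conj g).toMonoidHom :=
      (closure_le _).2 fun x hx => subset_closure
        (show ¬ p ∣ orderOf (MulAut.conj g x) by rwa [MulEquiv.orderOf_eq])
    simpa using hle hn

theorem isPGroup_quotient_closure_setOf_not_dvd_orderOf [Finite G] (hp : p.Prime) :
    IsPGroup p (G ⧸ closure {x : G | ¬ p ∣ orderOf x}) := by
  intro q
  obtain ⟨x, rfl⟩ := QuotientGroup.mk_surjective q
  obtain ⟨k, hk⟩ := exists_not_dvd_orderOf_pow_prime_pow hp (isOfFinOrder_of_finite x)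
  exact ⟨k, (QuotientGroup.eq_one_iff _).2 (subset_closure hk)⟩

theorem pResidual_eq_closure [Finite G] (hp : p.Prime) :
    pResidual p G = closure {x : G | ¬ p ∣ orderOf x} := by
  refine le_antisymm
    (sInf_le ⟨inferInstance, isPGroup_quotient_closure_setOf_not_dvd_orderOf hp⟩) (le_sInf ?_)
  rintro N ⟨hN, hQ⟩
  exact (closure_le N).2 fun x hx => mem_of_isPGroup_quotient hp hQ hx

theorem pResidualIn_eq_closure [Finite G] (hp : p.Prime) (H : Subgroup G) :
    pResidualIn p H = closure {x | x ∈ H ∧ ¬ p ∣ orderOf x} := by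
  rw [pResidualIn, pResidual_eq_closure hp, MonoidHom.map_closure]
  congr 1
  ext x
  constructor
  · rintro ⟨y, hy, rfl⟩
    exact ⟨y.2, by rwa [coe_subtype, orderOf_submonoid]⟩
  · rintro ⟨hxH, hx⟩
    refine ⟨⟨x, hxH⟩, ?_, rfl⟩
    show ¬ p ∣ orderOf (⟨x, hxH⟩ : H)
    rwa [← orderOf_submonoid]

theorem map_pResidualIn [Finite G] [Finite G'] (hp : p.Prime) {f : G →* G'}
    (hf : Function.Injective f) (H : Subgroup G) :
    (pResidualIn p H).map f = pResidualIn p (H.map f) := by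
  rw [pResidualIn_eq_closure hp, pResidualIn_eq_closure hp, MonoidHom.map_closure]
  congr 1
  ext y
  constructor
  · rintro ⟨x, ⟨hxH, hx⟩, rfl⟩
    exact ⟨mem_map_of_mem f hxH, by rwa [orderOf_injective f hf]⟩
  · rintro ⟨⟨x, hxH, rfl⟩, hx⟩
    exact ⟨x, ⟨hxH, by rwa [orderOf_injective f hf] at hx⟩, rfl⟩

theorem conjSub_pResidualIn [Finite G] (hp : p.Prime) (g : G) (H : Subgroup G) :
    conjSub g (pResidualIn p H) = pResidualIn p (conjSub g H) :=
  map_pResidualIn hp (MulEquiv.injective _) H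

theorem pResidualIn_le (H : Subgroup G) : pResidualIn p H ≤ H :=
  map_subtype_le _

end Residual

section PSubnormal

variable {G : Type*} [Group G] [Finite G] {p : ℕ}

theorem IsPSubnormalIn.pResidualIn_eq (hp : p.Prime) {K H : Subgroup G}
    (h : IsPSubnormalIn p K H) : pResidualIn p K = pResidualIn p H := by
  rw [isPSubnormalIn_iff_reflTransGen] at h
  induction h with
  | refl => rfl
  | tail _ hstep ih =>
    rw [ih, pResidualIn_eq_closure hp, pResidualIn_eq_closure hp]
    refine le_antisymm (closure_mono fun x hx => ⟨hstep.1 hx.1, hx.2⟩) ((closure_le _).2 ?_)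
    exact fun x hx => subset_closure ⟨hstep.mem_of_not_dvd_orderOf hp hx.1 hx.2, hx.2⟩

theorem reflTransGen_isPStep_top_of_pResidual_le (hp : p.Prime) {L : Subgroup G}
    (hL : pResidual p G ≤ L) : Relation.ReflTransGen (IsPStep p) L ⊤ := by
  rw [pResidual_eq_closure hp] at hL
  have h := ((isPGroup_quotient_closure_setOf_not_dvd_orderOf hp).reflTransGen_isPStep_top hp
    (L.map (QuotientGroup.mk' (closure {x : G | ¬ p ∣ orderOf x})))).lift _
      fun A B hAB => hAB.comap (QuotientGroup.mk'_surjective _)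
  rwa [Function.onFun, comap_map_eq_self (by rwa [QuotientGroup.ker_mk']), comap_top] at h

theorem isPSubnormalIn_of_pResidualIn_le (hp : p.Prime) {L M : Subgroup G}
    (hL : pResidualIn p M ≤ L) (hLM : L ≤ M) : IsPSubnormalIn p L M := by
  have h := reflTransGen_isPStep_top_of_pResidual_le hp (map_le_iff_le_comap.1 hL)
  rw [isPSubnormalIn_iff_reflTransGen]
  convert h.lift _ fun A B hAB => hAB.map M.subtype_injective
  · exact (map_comap_eq_self (by rwa [range_subtype])).symm
  · rw [← MonoidHom.range_eq_map, range_subtype]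

end PSubnormal

theorem conjSub_inv_conjSub {G : Type*} [Group G] (g : G) (K : Subgroup G) :
    conjSub g⁻¹ (conjSub g K) = K := by
  open Pointwise in
  change MulAut.conj g⁻¹ • MulAut.conj g • K = K
  rw [smul_smul, ← map_mul, inv_mul_cancel, map_one, one_smul]

/-- For a finite group `G`, a prime `p` and subgroups `H, K ≤ G`, there
exists `g ∈ G` such that `H ∩ gKg⁻¹` is a `p`-subnormal subgroup of both `H` and `gKg⁻¹`
if and only if `O^p(H)` and `O^p(K)` are conjugate subgroups of `G`. -/
theorem stmt4 (G : Type*) [Group G] [Finite G] (p : ℕ) (hp : p.Prime) (H K : Subgroup G) :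
    (∃ g : G, IsPSubnormalIn p (H ⊓ conjSub g K) H ∧
        IsPSubnormalIn p (H ⊓ conjSub g K) (conjSub g K)) ↔
      (∃ g : G, conjSub g (pResidualIn p H) = pResidualIn p K) := by
  constructor
  · rintro ⟨g, hH, hK⟩
    refine ⟨g⁻¹, ?_⟩
    rw [← hH.pResidualIn_eq hp, hK.pResidualIn_eq hp, conjSub_pResidualIn hp, conjSub_inv_conjSub]
  · rintro ⟨g, hg⟩
    have hR : pResidualIn p (conjSub g⁻¹ K) = pResidualIn p H := by
      rw [← conjSub_pResidualIn hp, ← hg, conjSub_inv_conjSub]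
    have hle : pResidualIn p H ≤ H ⊓ conjSub g⁻¹ K :=
      le_inf (pResidualIn_le H) (hR ▸ pResidualIn_le _)
    exact ⟨g⁻¹, isPSubnormalIn_of_pResidualIn_le hp hle inf_le_left,
      isPSubnormalIn_of_pResidualIn_le hp (hR ▸ hle) inf_le_right⟩
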